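/- A nonempty closed subset C of K is a convex-trace set with respect to Φ if and only if for every x̄ ∈ K \ C there exists φ ∈ Φ such that sup_{x∈C} φ(x) < φ(x̄). -/

import Mathlib

open MeasureTheory Set

section Defs

variable {K : Type*} [TopologicalSpace K] [CompactSpace K]

/-- The canonical injection `δ^Φ : K → Φ*`, `δ^Φ(x)(φ) = φ(x)`. -/
noncomputable def deltaPhi (Φ : Submodule ℝ C(K, ℝ)) (x : K) : WeakDual ℝ ↥Φ :=
  (ContinuousMap.evalCLM ℝ x).comp Φ.subtypeL

/-- The set `K(Φ) = {Q ∈ Φ* : ‖Q‖ = Q(𝟏) = 1}`. -/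
noncomputable def KPhi (Φ : Submodule ℝ C(K, ℝ))
    (h1 : ContinuousMap.const K (1 : ℝ) ∈ Φ) : Set (WeakDual ℝ ↥Φ) :=
  {Q | @Norm.norm (↥Φ →L[ℝ] ℝ)
      (@ContinuousLinearMap.hasOpNorm ℝ ℝ ↥Φ ℝ (Submodule.seminormedAddCommGroup Φ) _ _ _ _ _
        (RingHom.id ℝ)) (WeakDual.toStrongDual Q) = 1 ∧ Q ⟨ContinuousMap.const K (1 : ℝ), h1⟩ = 1}

end Defs

section DefsTC

variable {K : Type*} [TopologicalSpace K] [CompactSpace K]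

/-- A closed set `C ⊆ K` is convex-trace w.r.t. `Φ` if `δ^Φ(C) = δ^Φ(K) ∩ Ĉ` for some
weak*-closed convex subset `Ĉ` of `K(Φ)`. -/
def TraceConvexSet (Φ : Submodule ℝ C(K, ℝ)) (h1 : ContinuousMap.const K (1 : ℝ) ∈ Φ)
    (C : Set K) : Prop :=
  IsClosed C ∧ ∃ Ch : Set (WeakDual ℝ ↥Φ), Ch ⊆ KPhi Φ h1 ∧ IsClosed Ch ∧ Convex ℝ Ch ∧
    deltaPhi Φ '' C = deltaPhi Φ '' Set.univ ∩ Ch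

end DefsTC

/-!
(⇒) Since `Φ` separates points, `δ^Φ` is injective, so for `x̄ ∉ C` the point `δ^Φ(x̄)` lies
outside `Ĉ`. Hahn–Banach in the locally convex weak-* topology separates it from `Ĉ` by a
weak-* continuous functional, which is evaluation at some `φ ∈ Φ`; this `φ` separates `x̄`
from `C`.

(⇐) Take for `Ĉ` the `Q ∈ K(Φ)` with `Q(φ) ≤ sup_C φ` for every `φ ∈ Φ`, the intersection of
`K(Φ)` with weak-* closed half-spaces. It contains `δ^Φ(C)`, and for `x ∉ C` the separating
`φ` shows `δ^Φ(x) ∉ Ĉ`.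
-/

namespace WeakDual

variable {E : Type*} [NormedAddCommGroup E] [NormedSpace ℝ E]

instance instLocallyConvexSpaceReal : LocallyConvexSpace ℝ (WeakDual ℝ E) :=
  (withSeminorms ℝ E).toLocallyConvexSpace

theorem exists_apply_lt_of_notMem {s : Set (WeakDual ℝ E)} (hconv : Convex ℝ s)
    (hcl : IsClosed s) {x : WeakDual ℝ E} (hx : x ∉ s) :
    ∃ (m : E) (u : ℝ), (∀ Q ∈ s, Q m < u) ∧ u < x m := by
  obtain ⟨f, u, hfs, hfx⟩ := geometric_hahn_banach_closed_point hconv hcl hx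
  obtain ⟨m, rfl⟩ := LinearMap.dualEmbedding_surjective (topDualPairing ℝ E) f
  exact ⟨m, u, hfs, hfx⟩

theorem isLinearMap_apply (m : E) : IsLinearMap ℝ fun Q : WeakDual ℝ E => Q m :=
  ⟨fun _ _ => rfl, fun _ _ => rfl⟩

theorem norm_toStrongDual_eq_one {Q : WeakDual ℝ E} {e : E} (he : ‖e‖ ≤ 1)
    (hQ : ‖toStrongDual Q‖ ≤ 1) (hQe : Q e = 1) : ‖toStrongDual Q‖ = 1 := by
  refine le_antisymm hQ ?_
  calc (1 : ℝ) = ‖Q e‖ := by rw [hQe, norm_one]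
    _ ≤ ‖toStrongDual Q‖ := (toStrongDual Q).unit_le_opNorm e he

theorem setOf_norm_eq_one_and_apply_eq_one {e : E} (he : ‖e‖ ≤ 1) :
    {Q : WeakDual ℝ E | ‖toStrongDual Q‖ = 1 ∧ Q e = 1} =
      {Q | ‖toStrongDual Q‖ ≤ 1 ∧ Q e = 1} := by
  ext Q
  exact ⟨fun ⟨hQ, hQe⟩ => ⟨hQ.le, hQe⟩,
    fun ⟨hQ, hQe⟩ => ⟨norm_toStrongDual_eq_one he hQ hQe, hQe⟩⟩

theorem isClosed_setOf_norm_eq_one_and_apply_eq_one {e : E} (he : ‖e‖ ≤ 1) :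
    IsClosed {Q : WeakDual ℝ E | ‖toStrongDual Q‖ = 1 ∧ Q e = 1} := by
  have hball : IsClosed {Q : WeakDual ℝ E | ‖toStrongDual Q‖ ≤ 1} := by
    simpa [Metric.closedBall, dist_zero_right] using isClosed_closedBall (0 : StrongDual ℝ E) 1
  rw [setOf_norm_eq_one_and_apply_eq_one he]
  exact hball.inter (isClosed_eq (eval_continuous e) continuous_const)

theorem convex_setOf_norm_eq_one_and_apply_eq_one {e : E} (he : ‖e‖ ≤ 1) :
    Convex ℝ {Q : WeakDual ℝ E | ‖toStrongDual Q‖ = 1 ∧ Q e = 1} := by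
  have hball : Convex ℝ {Q : WeakDual ℝ E | ‖toStrongDual Q‖ ≤ 1} := by
    simpa [Metric.closedBall, dist_zero_right] using
      (convex_closedBall (0 : StrongDual ℝ E) 1).linear_preimage toStrongDual.toLinearMap
  rw [setOf_norm_eq_one_and_apply_eq_one he]
  exact hball.inter (convex_hyperplane (isLinearMap_apply e) 1)

theorem isClosed_setOf_forall_apply_le (c : E → ℝ) :
    IsClosed {Q : WeakDual ℝ E | ∀ m, Q m ≤ c m} := by
  simpa only [ofPred_forall] using
    isClosed_iInter fun m => isClosed_le (eval_continuous m) continuous_const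

theorem convex_setOf_forall_apply_le (c : E → ℝ) :
    Convex ℝ {Q : WeakDual ℝ E | ∀ m, Q m ≤ c m} := by
  simpa only [ofPred_forall] using
    convex_iInter fun m => convex_halfSpace_le (isLinearMap_apply m) (c m)

end WeakDual

section TraceConvex

variable {K : Type*} [TopologicalSpace K] {Φ : Submodule ℝ C(K, ℝ)}

theorem deltaPhi_injective (hsep : ∀ x y : K, x ≠ y → ∃ φ ∈ Φ, φ x ≠ φ y) :
    Function.Injective (deltaPhi Φ) := by
  intro x y hxy
  by_contra hne
  obtain ⟨φ, hφ, hφxy⟩ := hsep x y hne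
  exact hφxy (DFunLike.congr_fun hxy ⟨φ, hφ⟩)

variable [CompactSpace K]

theorem norm_const_one_le_one (h1 : ContinuousMap.const K (1 : ℝ) ∈ Φ) :
    ‖(⟨ContinuousMap.const K 1, h1⟩ : Φ)‖ ≤ 1 :=
  (ContinuousMap.norm_le _ zero_le_one).mpr fun _ => by simp

-- `(E := Φ)`: `Φ` carries the subtype topology here, which unification matches with the norm
-- topology only once `E` is fixed.
theorem isClosed_KPhi (h1 : ContinuousMap.const K (1 : ℝ) ∈ Φ) : IsClosed (KPhi Φ h1) :=
  WeakDual.isClosed_setOf_norm_eq_one_and_apply_eq_one (E := Φ) (norm_const_one_le_one h1)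

theorem convex_KPhi (h1 : ContinuousMap.const K (1 : ℝ) ∈ Φ) : Convex ℝ (KPhi Φ h1) :=
  WeakDual.convex_setOf_norm_eq_one_and_apply_eq_one (E := Φ) (norm_const_one_le_one h1)

theorem deltaPhi_mem_KPhi (h1 : ContinuousMap.const K (1 : ℝ) ∈ Φ) (x : K) :
    deltaPhi Φ x ∈ KPhi Φ h1 := by
  refine ⟨WeakDual.norm_toStrongDual_eq_one (E := Φ) (norm_const_one_le_one h1) ?_ rfl, rfl⟩
  refine ContinuousLinearMap.opNorm_le_bound _ zero_le_one fun φ => ?_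
  rw [one_mul]
  exact (φ : C(K, ℝ)).norm_coe_le_norm x

theorem exists_sSup_lt_of_traceConvexSet (hsep : ∀ x y : K, x ≠ y → ∃ φ ∈ Φ, φ x ≠ φ y)
    {h1 : ContinuousMap.const K (1 : ℝ) ∈ Φ} {C : Set K} (hne : C.Nonempty)
    (hC : TraceConvexSet Φ h1 C) {xb : K} (hxb : xb ∉ C) :
    ∃ φ ∈ Φ, sSup ((fun y : K => φ y) '' C) < φ xb := by
  obtain ⟨-, Ch, -, hChcl, hChconv, hChEq⟩ := hC
  have hxbCh : deltaPhi Φ xb ∉ Ch := by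
    intro hmem
    obtain ⟨x, hxC, hx⟩ : deltaPhi Φ xb ∈ deltaPhi Φ '' C := by
      rw [hChEq]; exact ⟨mem_image_of_mem _ (mem_univ xb), hmem⟩
    exact hxb (deltaPhi_injective hsep hx ▸ hxC)
  obtain ⟨m, u, hmu, hum⟩ := WeakDual.exists_apply_lt_of_notMem (E := Φ) hChconv hChcl hxbCh
  have hCCh : deltaPhi Φ '' C ⊆ Ch := hChEq ▸ inter_subset_right
  have hsup : sSup ((fun y : K => (m : C(K, ℝ)) y) '' C) ≤ u := by
    refine csSup_le (hne.image _) ?_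
    rintro _ ⟨x, hx, rfl⟩
    exact (hmu _ (hCCh (mem_image_of_mem _ hx))).le
  exact ⟨m, m.2, hsup.trans_lt hum⟩

theorem traceConvexSet_of_forall_exists_sSup_lt (h1 : ContinuousMap.const K (1 : ℝ) ∈ Φ)
    {C : Set K} (hC : IsClosed C)
    (hsepC : ∀ xb : K, xb ∉ C → ∃ φ ∈ Φ, sSup ((fun y : K => φ y) '' C) < φ xb) :
    TraceConvexSet Φ h1 C := by
  set c : Φ → ℝ := fun φ => sSup ((fun y : K => (φ : C(K, ℝ)) y) '' C)
  refine ⟨hC, KPhi Φ h1 ∩ {Q | ∀ φ, Q φ ≤ c φ}, inter_subset_left,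
    (isClosed_KPhi h1).inter (WeakDual.isClosed_setOf_forall_apply_le (E := Φ) c),
    (convex_KPhi h1).inter (WeakDual.convex_setOf_forall_apply_le (E := Φ) c), ?_⟩
  ext Q
  constructor
  · rintro ⟨x, hx, rfl⟩
    refine ⟨mem_image_of_mem _ (mem_univ x), deltaPhi_mem_KPhi h1 x, fun φ => ?_⟩
    exact le_csSup (hC.isCompact.image (φ : C(K, ℝ)).continuous).bddAbove ⟨x, hx, rfl⟩
  · rintro ⟨⟨x, -, rfl⟩, -, hQc⟩
    by_contra hx
    have hxC : x ∉ C := fun hxC => hx (mem_image_of_mem _ hxC)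
    obtain ⟨φ, hφ, hlt⟩ := hsepC x hxC
    exact (hQc ⟨φ, hφ⟩).not_gt hlt

end TraceConvex

theorem stmt7_general {K : Type*} [TopologicalSpace K] [CompactSpace K]
    (Φ : Submodule ℝ C(K, ℝ))
    (hsep : ∀ x y : K, x ≠ y → ∃ φ ∈ Φ, φ x ≠ φ y)
    (hconst : ∀ c : ℝ, ContinuousMap.const K c ∈ Φ)
    (C : Set K) (hne : C.Nonempty) (hC : IsClosed C) :
    TraceConvexSet Φ (hconst 1) C ↔
      ∀ xb : K, xb ∉ C → ∃ φ ∈ Φ, sSup ((fun y : K => φ y) '' C) < φ xb :=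
  ⟨fun h _ hxb => exists_sSup_lt_of_traceConvexSet hsep hne h hxb,
    traceConvexSet_of_forall_exists_sSup_lt (hconst 1) hC⟩

/-- **Separation theorem.** A nonempty closed `C ⊆ K` is convex-trace w.r.t.
`Φ` iff every `x̄ ∈ K \ C` can be separated from `C` by some `φ ∈ Φ`:
`sup_{x∈C} φ(x) < φ(x̄)`. -/
theorem stmt7 {K : Type*} [TopologicalSpace K] [CompactSpace K] [T2Space K]
    (Φ : Submodule ℝ C(K, ℝ)) (hΦclosed : IsClosed (Φ : Set C(K, ℝ)))
    (hsep : ∀ x y : K, x ≠ y → ∃ φ ∈ Φ, φ x ≠ φ y)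
    (hconst : ∀ c : ℝ, ContinuousMap.const K c ∈ Φ)
    (C : Set K) (hne : C.Nonempty) (hC : IsClosed C) :
    TraceConvexSet Φ (hconst 1) C ↔
      ∀ xb : K, xb ∉ C → ∃ φ ∈ Φ, sSup ((fun y : K => φ y) '' C) < φ xb :=
  stmt7_general Φ hsep hconst C hne hC
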